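/- Let M and M' be compact Hausdorff spaces, θ : M → M and θ' : M' → M' homeomorphisms with θ^p = id and θ'^p = id (p prime), and assume M_θ ≠ ∅ and M'_{θ'} ≠ ∅. Then every unital star-algebra isomorphism Δ : D(M',θ') → D(M,θ) maps D(M'₀,θ') onto D(M₀,θ); that is, Δ carries the ideal of matrices vanishing on M'_{θ'} exactly onto the ideal of matrices vanishing on M_θ. -/

import Mathlib

/-!
`D(M₀,θ)` is the intersection of the kernels of the characters `D(M,θ) → ℂ`, a purely algebraic
description, so every algebra isomorphism preserves it.

For a fixed point `x` and a `p`-th root of unity `ω`, `a ↦ ∑ₖ a₀ₖ(x) ωᵏ` is a character, and by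
discrete Fourier inversion these characters together see every entry of `a` at `x`. Conversely,
a character `φ` restricted along the diagonal embedding `f ↦ diag(f, f ∘ θ, …, f ∘ θ^(p-1))` is a
character of `C(M, ℂ)`, hence evaluation at some point `x`. The cyclic shift matrix `S` is
invertible and conjugates `diag(f)` to `diag(f ∘ θ)`, which forces `θ x = x`; writing
`a = ∑ₖ diag(a₀ₖ) Sᵏ` then gives `φ a = ∑ₖ a₀ₖ(x) φ(Sᵏ) = 0` whenever `a` vanishes on `M_θ`.
-/

open Matrix

/-- `DPred p θ a` says that the matrix `a ∈ M_p(C(M,ℂ))` (indexed by `ℤ/pℤ`) lies in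
`D(M,θ)`, i.e. `a_{i+1,j+1} = a_{i,j} ∘ θ`. -/
def DPred {M : Type*} [TopologicalSpace M] (p : ℕ) (θ : M → M)
    (a : Matrix (ZMod p) (ZMod p) C(M, ℂ)) : Prop :=
  ∀ i j : ZMod p, ∀ x : M, a (i + 1) (j + 1) x = a i j (θ x)

theorem iterate_val_add_one {X : Type*} {θ : X → X} {p : ℕ} [NeZero p]
    (hθ : ∀ x, θ^[p] x = x) (i : ZMod p) (x : X) :
    θ^[(i + 1).val] x = θ^[i.val + 1] x := by
  have : i + 1 = ((i.val + 1 : ℕ) : ZMod p) := by simp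
  rw [this, ZMod.val_natCast, Function.IsPeriodicPt.iterate_mod_apply (hθ x)]

theorem ZMod.eq_zero_of_forall_sum_mul_pow_val_eq_zero {p : ℕ} [NeZero p] (c : ZMod p → ℂ)
    (h : ∀ ω : ℂ, ω ^ p = 1 → ∑ k : ZMod p, c k * ω ^ k.val = 0) : c = 0 := by
  set P : Polynomial ℂ := ∑ k : ZMod p, Polynomial.C (c k) * Polynomial.X ^ k.val
  have hP : P = 0 := by
    have hp : 0 < p := Nat.pos_of_neZero p
    refine Polynomial.eq_zero_of_natDegree_lt_card_of_eval_eq_zero' P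
      (Polynomial.nthRootsFinset p (1 : ℂ)) (fun ω hω => ?_) ?_
    · rw [Polynomial.mem_nthRootsFinset hp] at hω
      simpa [P, Polynomial.eval_finsetSum] using h ω hω
    · rw [(Complex.isPrimitiveRoot_exp p (NeZero.ne p)).card_nthRootsFinset]
      refine (Polynomial.natDegree_sum_le_of_forall_le _ _ fun k _ => ?_).trans_lt
        (Nat.sub_lt hp one_pos)
      exact (Polynomial.natDegree_C_mul_X_pow_le _ _).trans (Nat.le_sub_one_of_lt k.val_lt)
  funext k
  simpa [P, Polynomial.finsetSum_coeff, Polynomial.coeff_C_mul_X_pow,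
    (ZMod.val_injective p).eq_iff] using congrArg (Polynomial.coeff · k.val) hP

theorem ContinuousMap.exists_algHom_eq_eval {X : Type*} [TopologicalSpace X] [CompactSpace X]
    [T2Space X] (χ : C(X, ℂ) →ₐ[ℂ] ℂ) : ∃ x, ∀ f, χ f = f x := by
  obtain ⟨x, hx⟩ := (WeakDual.CharacterSpace.continuousMapEval_bijective X ℂ).2
    (WeakDual.CharacterSpace.equivAlgHom.symm χ)
  exact ⟨x, fun f => by simpa using (DFunLike.congr_fun hx f).symm⟩

theorem ContinuousMap.eq_of_forall_apply_eq {X : Type*} [TopologicalSpace X] [CompactSpace X]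
    [T2Space X] {x y : X} (h : ∀ f : C(X, ℂ), f x = f y) : x = y :=
  (WeakDual.CharacterSpace.continuousMapEval_bijective X ℂ).1 (WeakDual.CharacterSpace.ext h)

theorem AlgEquiv.forall_algHom_apply_eq_zero_iff {R A B : Type*} [CommSemiring R] [Semiring A]
    [Semiring B] [Algebra R A] [Algebra R B] (e : A ≃ₐ[R] B) (a : A) :
    (∀ φ : B →ₐ[R] R, φ (e a) = 0) ↔ ∀ φ : A →ₐ[R] R, φ a = 0 :=
  ⟨fun h φ => by simpa using h (φ.comp e.symm), fun h φ => h (φ.comp e)⟩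

namespace DPred

variable {M : Type*} [TopologicalSpace M] {p : ℕ} {θ : M → M}
  {a b : Matrix (ZMod p) (ZMod p) C(M, ℂ)}

theorem add (ha : DPred p θ a) (hb : DPred p θ b) : DPred p θ (a + b) := by
  intro i j x
  simp [ha i j x, hb i j x]

theorem mul [NeZero p] (ha : DPred p θ a) (hb : DPred p θ b) : DPred p θ (a * b) := by
  intro i j x
  simp only [mul_apply, ContinuousMap.sum_apply, ContinuousMap.mul_apply]
  refine (Fintype.sum_equiv (Equiv.addRight 1) _ _ fun k => ?_).symm
  simp [ha i k x, hb k j x]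

theorem algebraMap [NeZero p] (c : ℂ) :
    DPred p θ (algebraMap ℂ (Matrix (ZMod p) (ZMod p) C(M, ℂ)) c) := by
  intro i j x
  by_cases h : i = j <;> simp [algebraMap_matrix_apply, h]

theorem apply_add_natCast (ha : DPred p θ a) (n : ℕ) (i j : ZMod p) (x : M) :
    a (i + n) (j + n) x = a i j (θ^[n] x) := by
  induction n generalizing x with
  | zero => simp
  | succ n ih =>
    push_cast
    rw [← add_assoc, ← add_assoc, ha, ih, Function.iterate_succ_apply]

theorem apply_eq [NeZero p] (ha : DPred p θ a) (i j : ZMod p) (x : M) :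
    a i j x = a 0 (j - i) (θ^[i.val] x) := by
  simpa using ha.apply_add_natCast i.val 0 (j - i) x

theorem apply_of_isFixedPt [NeZero p] (ha : DPred p θ a) {x : M} (hx : θ x = x)
    (i j : ZMod p) : a i j x = a 0 (j - i) x := by
  rw [ha.apply_eq, Function.iterate_fixed hx]

end DPred

section EquivariantMatrices

variable {M : Type*} [TopologicalSpace M] {p : ℕ} {θ : M → M}

noncomputable def shiftMatrix (k : ZMod p) : Matrix (ZMod p) (ZMod p) C(M, ℂ) :=
  (Equiv.addRight k).toPEquiv.toMatrix

theorem shiftMatrix_apply (k i j : ZMod p) :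
    shiftMatrix (M := M) k i j = if i + k = j then 1 else 0 := by
  simp [shiftMatrix, PEquiv.toMatrix_apply]

theorem dPred_shiftMatrix (k : ZMod p) : DPred p θ (shiftMatrix (M := M) k) := by
  intro i j x
  simp only [shiftMatrix_apply, add_right_comm i 1 k, add_left_inj]
  split_ifs <;> rfl

theorem shiftMatrix_zero : shiftMatrix (M := M) (0 : ZMod p) = 1 := by
  ext i j : 2
  simp [shiftMatrix_apply, one_apply]

variable [NeZero p]

theorem shiftMatrix_add (k l : ZMod p) :
    shiftMatrix (M := M) (k + l) = shiftMatrix k * shiftMatrix l := by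
  rw [shiftMatrix, shiftMatrix, shiftMatrix, ← PEquiv.toMatrix_trans, ← Equiv.toPEquiv_trans]
  congr 2
  ext i
  simp [add_assoc]

variable (p θ) in
/-- The algebra `D(M,θ)`. -/
def equivariantMatrices : Subalgebra ℂ (Matrix (ZMod p) (ZMod p) C(M, ℂ)) where
  carrier := {a | DPred p θ a}
  mul_mem' := DPred.mul
  add_mem' := DPred.add
  algebraMap_mem' := DPred.algebraMap

namespace equivariantMatrices

variable (θ) in
noncomputable def shift (k : ZMod p) : equivariantMatrices p θ :=
  ⟨shiftMatrix k, dPred_shiftMatrix k⟩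

theorem shift_one_mul_shift_neg_one :
    shift θ (1 : ZMod p) * shift θ (-1) = 1 :=
  Subtype.ext <| by
    simp only [shift, Subalgebra.coe_mul, ← shiftMatrix_add, add_neg_cancel, shiftMatrix_zero,
      OneMemClass.coe_one]

section FixedPointCharacter

variable {x : M} {ω : ℂ}

theorem sum_mul_apply_mul_pow_val (hx : θ x = x) (hω : ω ^ p = 1)
    (a b : Matrix (ZMod p) (ZMod p) C(M, ℂ)) (hb : DPred p θ b) :
    ∑ k : ZMod p, (a * b) 0 k x * ω ^ k.val =
      (∑ j : ZMod p, a 0 j x * ω ^ j.val) * ∑ m : ZMod p, b 0 m x * ω ^ m.val := by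
  have hpow (j m : ZMod p) : ω ^ (j + m).val = ω ^ j.val * ω ^ m.val := by
    rw [ZMod.val_add, ← pow_eq_pow_mod _ hω, pow_add]
  calc ∑ k : ZMod p, (a * b) 0 k x * ω ^ k.val
      = ∑ j : ZMod p, ∑ k : ZMod p, a 0 j x * b 0 (k - j) x * ω ^ (j + (k - j)).val := by
        simp only [mul_apply, ContinuousMap.sum_apply, ContinuousMap.mul_apply, Finset.sum_mul,
          add_sub_cancel]
        refine Finset.sum_comm.trans (Finset.sum_congr rfl fun j _ => Finset.sum_congr rfl
          fun k _ => ?_)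
        rw [hb.apply_of_isFixedPt hx]
    _ = ∑ j : ZMod p, ∑ m : ZMod p, a 0 j x * ω ^ j.val * (b 0 m x * ω ^ m.val) := by
        refine Finset.sum_congr rfl fun j _ => Fintype.sum_equiv (Equiv.subRight j) _ _ fun k => ?_
        rw [Equiv.subRight_apply, hpow]
        ring
    _ = _ := by simp only [Finset.sum_mul_sum]

noncomputable def fixedPointCharacter (hx : θ x = x) (hω : ω ^ p = 1) :
    equivariantMatrices p θ →ₐ[ℂ] ℂ where
  toFun a := ∑ k : ZMod p, (a : Matrix (ZMod p) (ZMod p) C(M, ℂ)) 0 k x * ω ^ k.val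
  map_one' := by simp [one_apply, apply_ite, ite_apply]
  map_mul' a b := sum_mul_apply_mul_pow_val hx hω a b b.2
  map_zero' := by simp
  map_add' a b := by simp [add_mul, Finset.sum_add_distrib]
  commutes' c := by simp [algebraMap_matrix_apply, apply_ite, ite_apply]

end FixedPointCharacter

theorem vanishes_of_forall_algHom_eq_zero (a : equivariantMatrices p θ)
    (h : ∀ φ : equivariantMatrices p θ →ₐ[ℂ] ℂ, φ a = 0) :
    ∀ i j : ZMod p, ∀ x : M, θ x = x → (a : Matrix (ZMod p) (ZMod p) C(M, ℂ)) i j x = 0 := by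
  intro i j x hx
  have hrow := ZMod.eq_zero_of_forall_sum_mul_pow_val_eq_zero
    (fun k => (a : Matrix (ZMod p) (ZMod p) C(M, ℂ)) 0 k x)
    fun ω hω => h (fixedPointCharacter hx hω)
  rw [a.2.apply_of_isFixedPt hx, congrFun hrow]
  rfl

section DiagonalEmbedding

variable (hθc : Continuous θ) (hθ : ∀ x, θ^[p] x = x)

noncomputable def diagonalEmbedding : C(M, ℂ) →ₐ[ℂ] equivariantMatrices p θ :=
  ((diagonalAlgHom ℂ).comp (AlgHom.pi fun i : ZMod p =>
    ContinuousMap.compRightAlgHom ℂ ℂ ⟨θ^[i.val], hθc.iterate _⟩)).codRestrict _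
  fun f i j x => by
    by_cases h : i = j
    · simp [h, iterate_val_add_one hθ]
    · simp [h]

theorem coe_diagonalEmbedding (f : C(M, ℂ)) :
    (diagonalEmbedding hθc hθ f : Matrix (ZMod p) (ZMod p) C(M, ℂ)) =
      diagonal fun i => f.comp ⟨θ^[i.val], hθc.iterate _⟩ := rfl

theorem shift_one_mul_diagonalEmbedding (f : C(M, ℂ)) :
    shift θ 1 * diagonalEmbedding hθc hθ f =
      diagonalEmbedding hθc hθ (f.comp ⟨θ, hθc⟩) * shift θ 1 := by
  ext i j x : 3
  simp only [shift, Subalgebra.coe_mul, coe_diagonalEmbedding, mul_diagonal, diagonal_mul,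
    shiftMatrix_apply]
  split_ifs with h
  · subst h
    simp [iterate_val_add_one hθ, Function.iterate_succ_apply']
  · simp

theorem sum_diagonalEmbedding_mul_shift (a : equivariantMatrices p θ) :
    ∑ k, diagonalEmbedding hθc hθ ((a : Matrix (ZMod p) (ZMod p) C(M, ℂ)) 0 k) * shift θ k =
      a := by
  ext i j x : 3
  simp only [shift, AddSubmonoidClass.coe_finsetSum, Subalgebra.coe_mul, coe_diagonalEmbedding,
    diagonal_mul, shiftMatrix_apply, Matrix.sum_apply, ContinuousMap.sum_apply, mul_ite, mul_one,
    mul_zero]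
  rw [Finset.sum_eq_single (j - i)]
  · simp [a.2.apply_eq i j x]
  · intro k _ hk
    rw [if_neg (by rintro rfl; exact hk (by ring)), ContinuousMap.zero_apply]
  · simp

variable [CompactSpace M] [T2Space M]

theorem isFixedPt_of_algHom_diagonalEmbedding
    (φ : equivariantMatrices p θ →ₐ[ℂ] ℂ) {x : M}
    (hx : ∀ f, φ (diagonalEmbedding hθc hθ f) = f x) : θ x = x := by
  have hunit : φ (shift θ 1) ≠ 0 := by
    intro h
    simpa [h] using congrArg φ (shift_one_mul_shift_neg_one (θ := θ) (p := p))
  refine ContinuousMap.eq_of_forall_apply_eq fun f => mul_left_cancel₀ hunit ?_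
  have := congrArg φ (shift_one_mul_diagonalEmbedding hθc hθ f)
  rw [map_mul, map_mul, hx, hx] at this
  rw [this, mul_comm]
  rfl

end DiagonalEmbedding

theorem algHom_eq_zero_of_vanishes [CompactSpace M] [T2Space M]
    (hθc : Continuous θ) (hθ : ∀ x, θ^[p] x = x) (φ : equivariantMatrices p θ →ₐ[ℂ] ℂ)
    (a : equivariantMatrices p θ)
    (ha : ∀ i j : ZMod p, ∀ x : M, θ x = x → (a : Matrix (ZMod p) (ZMod p) C(M, ℂ)) i j x = 0) :
    φ a = 0 := by
  obtain ⟨x, hx⟩ := ContinuousMap.exists_algHom_eq_eval (φ.comp (diagonalEmbedding hθc hθ))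
  have hfix := isFixedPt_of_algHom_diagonalEmbedding hθc hθ φ hx
  rw [← sum_diagonalEmbedding_mul_shift hθc hθ a, map_sum]
  refine Finset.sum_eq_zero fun k _ => ?_
  rw [map_mul, ← AlgHom.comp_apply, hx, ha 0 k x hfix, zero_mul]

theorem vanishes_iff_forall_algHom_eq_zero [CompactSpace M] [T2Space M]
    (hθc : Continuous θ) (hθ : ∀ x, θ^[p] x = x) (a : equivariantMatrices p θ) :
    (∀ i j : ZMod p, ∀ x : M, θ x = x → (a : Matrix (ZMod p) (ZMod p) C(M, ℂ)) i j x = 0) ↔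
      ∀ φ : equivariantMatrices p θ →ₐ[ℂ] ℂ, φ a = 0 :=
  ⟨fun ha φ => algHom_eq_zero_of_vanishes hθc hθ φ a ha, vanishes_of_forall_algHom_eq_zero a⟩

end equivariantMatrices

end EquivariantMatrices

theorem stmt_15_general {M M' : Type*} [TopologicalSpace M] [CompactSpace M] [T2Space M]
    [TopologicalSpace M'] [CompactSpace M'] [T2Space M']
    (p : ℕ) [NeZero p]
    (θ : M ≃ₜ M) (hθ : ∀ x, (⇑θ)^[p] x = x)
    (θ' : M' ≃ₜ M') (hθ' : ∀ x, (⇑θ')^[p] x = x)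
    (Δ : Matrix (ZMod p) (ZMod p) C(M', ℂ) → Matrix (ZMod p) (ZMod p) C(M, ℂ))
    -- Δ maps D(M',θ') into D(M,θ) ...
    (hmaps : ∀ a, DPred p θ' a → DPred p θ (Δ a))
    -- ... bijectively ...
    (hsurj : ∀ b, DPred p θ b → ∃ a, DPred p θ' a ∧ Δ a = b)
    (hinj : ∀ a b, DPred p θ' a → DPred p θ' b → Δ a = Δ b → a = b)
    -- ... as a unital star-algebra homomorphism:
    (hadd : ∀ a b, DPred p θ' a → DPred p θ' b → Δ (a + b) = Δ a + Δ b)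
    (hmul : ∀ a b, DPred p θ' a → DPred p θ' b → Δ (a * b) = Δ a * Δ b)
    (hsmul : ∀ (c : ℂ) a, DPred p θ' a → Δ (c • a) = c • Δ a)
    (hone : Δ 1 = 1) :
    ∀ a, DPred p θ' a →
      ((∀ i j : ZMod p, ∀ x : M', θ' x = x → a i j x = 0) ↔
       (∀ i j : ZMod p, ∀ x : M, θ x = x → Δ a i j x = 0)) := by
  let e : equivariantMatrices p θ' ≃ₐ[ℂ] equivariantMatrices p θ := AlgEquiv.ofBijective
    { toFun a := ⟨Δ a, hmaps a a.2⟩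
      map_one' := Subtype.ext hone
      map_mul' a b := Subtype.ext (hmul a b a.2 b.2)
      map_zero' := Subtype.ext (by simpa using hsmul 0 0 (zero_mem (equivariantMatrices p θ')))
      map_add' a b := Subtype.ext (hadd a b a.2 b.2)
      commutes' c := Subtype.ext (by
        simpa [Algebra.algebraMap_eq_smul_one, hone] using
          hsmul c 1 (one_mem (equivariantMatrices p θ'))) }
    ⟨fun a b h => Subtype.ext (hinj a b a.2 b.2 (congrArg Subtype.val h)),
      fun b => let ⟨a, ha, hab⟩ := hsurj b b.2; ⟨⟨a, ha⟩, Subtype.ext hab⟩⟩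
  intro a ha
  rw [equivariantMatrices.vanishes_iff_forall_algHom_eq_zero θ'.continuous hθ' ⟨a, ha⟩,
    equivariantMatrices.vanishes_iff_forall_algHom_eq_zero θ.continuous hθ ⟨Δ a, hmaps a ha⟩]
  exact (e.forall_algHom_apply_eq_zero_iff ⟨a, ha⟩).symm

/-- if `M_θ ≠ ∅` and `M'_{θ'} ≠ ∅`, every unital star-algebra
isomorphism `Δ : D(M',θ') → D(M,θ)` carries the ideal `D(M'₀,θ')` (matrices vanishing
on `M'_{θ'}`) exactly onto the ideal `D(M₀,θ)` (matrices vanishing on `M_θ`). -/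
theorem stmt_15 {M M' : Type*} [TopologicalSpace M] [CompactSpace M] [T2Space M]
    [TopologicalSpace M'] [CompactSpace M'] [T2Space M']
    (p : ℕ) (hp : p.Prime) [NeZero p]
    (θ : M ≃ₜ M) (hθ : ∀ x, (⇑θ)^[p] x = x)
    (θ' : M' ≃ₜ M') (hθ' : ∀ x, (⇑θ')^[p] x = x)
    (hMθ : ∃ x : M, θ x = x) (hM'θ' : ∃ x : M', θ' x = x)
    (Δ : Matrix (ZMod p) (ZMod p) C(M', ℂ) → Matrix (ZMod p) (ZMod p) C(M, ℂ))
    -- Δ maps D(M',θ') into D(M,θ) ...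
    (hmaps : ∀ a, DPred p θ' a → DPred p θ (Δ a))
    -- ... bijectively ...
    (hsurj : ∀ b, DPred p θ b → ∃ a, DPred p θ' a ∧ Δ a = b)
    (hinj : ∀ a b, DPred p θ' a → DPred p θ' b → Δ a = Δ b → a = b)
    -- ... as a unital star-algebra homomorphism:
    (hadd : ∀ a b, DPred p θ' a → DPred p θ' b → Δ (a + b) = Δ a + Δ b)
    (hmul : ∀ a b, DPred p θ' a → DPred p θ' b → Δ (a * b) = Δ a * Δ b)
    (hsmul : ∀ (c : ℂ) a, DPred p θ' a → Δ (c • a) = c • Δ a)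
    (hstar : ∀ a, DPred p θ' a → Δ (star a) = star (Δ a))
    (hone : Δ 1 = 1) :
    ∀ a, DPred p θ' a →
      ((∀ i j : ZMod p, ∀ x : M', θ' x = x → a i j x = 0) ↔
       (∀ i j : ZMod p, ∀ x : M, θ x = x → Δ a i j x = 0)) :=
  stmt_15_general p θ hθ θ' hθ' Δ hmaps hsurj hinj hadd hmul hsmul hone
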